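/- Fix k ≥ 1. There exists a constant C (depending only on k) such that for all positive integers n and b, the number Q_{k,4}^b of quadruples (π₁, π₂, π₃, π₄) of W-circuits of length 2k (with vertices in {1,…,n}) that are jointly matched and cross-matched and have exactly b distinct edge values across all four circuits satisfies Q_{k,4}^b ≤ C · n^{b+2}. -/

import Mathlib

open MeasureTheory ProbabilityTheory Filter Topology Matrix
open scoped ENNReal NNReal BigOperators Classical

noncomputable section

/-- The empirical spectral distribution of a Hermitian (real symmetric) matrix. -/
def esd {m : ℕ} (A : Matrix (Fin m) (Fin m) ℝ) (hA : A.IsHermitian) : Measure ℝ :=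
  ((m : ℝ≥0∞))⁻¹ • ∑ i : Fin m, Measure.dirac (hA.eigenvalues i)

lemma gram_isHermitian {p n : ℕ} (Z : Matrix (Fin p) (Fin n) ℝ) : (Z * Zᵀ).IsHermitian := by
  have h := Matrix.isHermitian_mul_conjTranspose_self Z
  rwa [Matrix.conjTranspose_eq_transpose_of_trivial] at h

/-- ESD of the Gram matrix `Z Zᵀ`. -/
def esdGram {p n : ℕ} (Z : Matrix (Fin p) (Fin n) ℝ) : Measure ℝ :=
  esd (Z * Zᵀ) (gram_isHermitian Z)

/-- Weak convergence of a sequence of measures on ℝ. -/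
def WeakLim (μs : ℕ → Measure ℝ) (μ : Measure ℝ) : Prop :=
  ∀ f : BoundedContinuousFunction ℝ ℝ,
    Tendsto (fun n => ∫ v, f v ∂(μs n)) atTop (𝓝 (∫ v, f v ∂μ))

/-- Truncation `x 1{|x| ≤ t}` at a (possibly infinite) level `t`. -/
def trunc (t : ℝ≥0∞) (v : ℝ) : ℝ := if ENNReal.ofReal |v| ≤ t then v else 0

/-- `P` is a partition of `{1, …, m}`. -/
def IsPart (m : ℕ) (P : Finset (Finset ℕ)) : Prop :=
  (∀ B ∈ P, B.Nonempty) ∧ (∀ B ∈ P, B ⊆ Finset.Icc 1 m) ∧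
    (∀ B ∈ P, ∀ C ∈ P, B ≠ C → Disjoint B C) ∧
    (∀ x ∈ Finset.Icc 1 m, ∃ B ∈ P, x ∈ B)

/-- All partitions of `{1, …, m}`. -/
def partitionsOf (m : ℕ) : Finset (Finset (Finset ℕ)) :=
  ((Finset.Icc 1 m).powerset.powerset).filter (IsPart m)

/-- Least element of a finite set of naturals (`0` for the empty set). -/
def minOf (B : Finset ℕ) : ℕ := B.min.untopD 0

/-- Every maximal run of consecutive integers in `B` has even length,
i.e. `B` is a union of sets of even sizes of consecutive integers. -/
def EvenRuns (B : Finset ℕ) : Prop :=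
  ∀ a b : ℕ, a ≤ b → (∀ x, a ≤ x → x ≤ b → x ∈ B) → (a - 1) ∉ B → (b + 1) ∉ B →
    Even (b + 1 - a)

/-- A special symmetric partition of `{1, …, 2k}`. -/
def SpecialSymmetric (k : ℕ) (P : Finset (Finset ℕ)) : Prop :=
  IsPart (2 * k) P ∧
  (∀ B ∈ P, (∀ C ∈ P, C.min ≤ B.min) → EvenRuns B) ∧
  (∀ V ∈ P, ∀ W ∈ P, V ≠ W → ∀ u ∈ V, ∀ v ∈ V, u < v → (∀ x ∈ V, ¬(u < x ∧ x < v)) →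
    (W.filter (fun w => u < w ∧ w < v ∧ Odd w)).card
      = (W.filter (fun w => u < w ∧ w < v ∧ Even w)).card)

/-- The special symmetric partitions of `{1,…,2k}` (as a finite set). -/
def SSpart (k : ℕ) : Finset (Finset (Finset ℕ)) :=
  (partitionsOf (2 * k)).filter (SpecialSymmetric k)

/-- The special symmetric partitions of `{1,…,2k}` with exactly `b` blocks. -/
def SSb (k b : ℕ) : Finset (Finset (Finset ℕ)) :=
  (SSpart k).filter (fun P => P.card = b)

/-- Number `r` of blocks with even least element ("`r+1` even generating vertices"). -/
def evenGenCount (P : Finset (Finset ℕ)) : ℕ :=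
  (P.filter (fun B => Even (minOf B))).card

/-- Extend a map on `{0,…,2k}` (coded as `Fin (2k+1)`) to all of ℕ. -/
def ext' {m : ℕ} (π : Fin (m + 1) → ℕ) (i : ℕ) : ℕ :=
  if h : i < m + 1 then π ⟨i, h⟩ else 0

/-- The set of S-circuits of length `2k` matching a partition `σ` of `{1,…,2k}`. -/
def PiS (p n k : ℕ) (σ : Finset (Finset ℕ)) : Set (Fin (2 * k + 1) → ℕ) :=
  { π | ext' π 0 = ext' π (2 * k) ∧
      (∀ i : ℕ, i ≤ 2 * k →
        (Even i → 1 ≤ ext' π i ∧ ext' π i ≤ p) ∧ (Odd i → 1 ≤ ext' π i ∧ ext' π i ≤ n)) ∧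
      (∀ i ∈ Finset.Icc 1 (2 * k), ∀ j ∈ Finset.Icc 1 (2 * k),
        ((∃ B ∈ σ, i ∈ B ∧ j ∈ B) ↔
          ((ext' π (i - 1), ext' π i) = (ext' π (j - 1), ext' π j) ∨
            (ext' π (i - 1), ext' π i) = (ext' π j, ext' π (j - 1))))) }

/-- The set of W-circuits of length `2k` (Wigner link function) matching `σ`. -/
def PiW (n k : ℕ) (σ : Finset (Finset ℕ)) : Set (Fin (2 * k + 1) → ℕ) :=
  { π | ext' π 0 = ext' π (2 * k) ∧
      (∀ i : ℕ, i ≤ 2 * k → 1 ≤ ext' π i ∧ ext' π i ≤ n) ∧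
      (∀ i ∈ Finset.Icc 1 (2 * k), ∀ j ∈ Finset.Icc 1 (2 * k),
        ((∃ B ∈ σ, i ∈ B ∧ j ∈ B) ↔
          Sym2.mk (ext' π (i - 1)) (ext' π i) = Sym2.mk (ext' π (j - 1)) (ext' π j))) }

/-- Positions `i, j ∈ {0,…,2k}` carry the same value in every circuit of `Π_S(σ)`. -/
def SameVal (k : ℕ) (σ : Finset (Finset ℕ)) (i j : ℕ) : Prop :=
  ∀ p n : ℕ, ∀ π ∈ PiS p n k σ, ext' π i = ext' π j

/-- Canonical representative (least equivalent position) of position `i`. -/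
def rep (k : ℕ) (σ : Finset (Finset ℕ)) (i : ℕ) : Fin (2 * k + 1) :=
  ⟨min (sInf {j | SameVal k σ i j}) (2 * k), by omega⟩

/-- The quantity `I_y(σ)`: `y^r` times the integral over `[0,1]^{b+1}` of the product over
the blocks of `σ` of `g_{|B|}` evaluated at the variables of the generating vertices
corresponding to the first appearance of each block.  (Assigning one variable to each
position and identifying forced-equal positions gives the same value as integrating over
one variable per generating vertex.) -/
def Iy (k : ℕ) (y : ℝ) (g : ℕ → ℝ → ℝ → ℝ) (σ : Finset (Finset ℕ)) : ℝ :=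
  y ^ evenGenCount σ *
    ∫ x : Fin (2 * k + 1) → ℝ,
      (∏ B ∈ σ, g B.card (x (rep k σ (minOf B - 1))) (x (rep k σ (minOf B))))
      ∂(Measure.pi fun _ => volume.restrict (Set.Icc (0 : ℝ) 1))

/-- sup of `|g|` over `[0,1]²`. -/
def Msup (g : ℝ → ℝ → ℝ) : ℝ :=
  sSup ((fun z : ℝ × ℝ => |g z.1 z.2|) '' (Set.Icc (0 : ℝ) 1 ×ˢ Set.Icc (0 : ℝ) 1))

/-- `M_m`: sup norm of `g_{m}` for even `m` (here `g k` codes `g_{2k}`), `0` for odd `m`. -/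
def Mval (g : ℕ → ℝ → ℝ → ℝ) (m : ℕ) : ℝ :=
  if Even m then Msup (g (m / 2)) else 0

/-- `α_{2k} = Σ_{σ ∈ P(2k)} M_σ`. -/
def alphaCarleman (g : ℕ → ℝ → ℝ → ℝ) (m : ℕ) : ℝ :=
  ∑ P ∈ partitionsOf m, ∏ B ∈ P, Mval g B.card

/-- Assumption A for the triangular array `x`, truncation levels `t`,
pre-limit functions `gn` (where `gn k n` codes `g_{2k,n}`) and limit functions
`g` (where `g k` codes `g_{2k}`), with aspect ratio `y`. -/
structure AssumpA {Ω : Type*} [MeasurableSpace Ω] (Pr : Measure Ω) (y : ℝ) (p : ℕ → ℕ)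
    (x : (n : ℕ) → Fin (p n) → Fin n → Ω → ℝ) (t : ℕ → ℝ≥0∞)
    (gn : ℕ → ℕ → ℝ → ℝ → ℝ) (g : ℕ → ℝ → ℝ → ℝ) : Prop where
  prob : IsProbabilityMeasure Pr
  ypos : 0 < y
  ratio : Tendsto (fun n => (p n : ℝ) / n) atTop (𝓝 y)
  meas : ∀ n i j, Measurable (x n i j)
  indep : ∀ n, iIndepFun
    (fun ij : Fin (p n) × Fin n => x n ij.1 ij.2) Pr
  gn_bdd : ∀ k n, ∃ M : ℝ, ∀ a ∈ Set.Icc (0 : ℝ) 1, ∀ b ∈ Set.Icc (0 : ℝ) 1,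
    |gn k n a b| ≤ M
  gn_riemann : ∀ k n,
    volume {z : ℝ × ℝ | z ∈ Set.Icc (0 : ℝ) 1 ×ˢ Set.Icc (0 : ℝ) 1 ∧
      ¬ ContinuousWithinAt (fun w : ℝ × ℝ => gn k n w.1 w.2)
          (Set.Icc (0 : ℝ) 1 ×ˢ Set.Icc (0 : ℝ) 1) z} = 0
  moment_even : ∀ k : ℕ, 1 ≤ k → ∀ n : ℕ, 1 ≤ n → ∀ i j,
    (n : ℝ) * ∫ ω, (trunc (t n) (x n i j ω)) ^ (2 * k) ∂Pr
      = gn k n (((i : ℕ) + 1) / (p n)) (((j : ℕ) + 1) / n)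
  moment_odd : ∀ k : ℕ, 1 ≤ k → ∀ α : ℝ, α < 1 →
    Tendsto (fun n : ℕ => (n : ℝ) ^ α *
      ⨆ i : Fin (p n), ⨆ j : Fin n,
        |∫ ω, (trunc (t n) (x n i j ω)) ^ (2 * k - 1) ∂Pr|) atTop (𝓝 0)
  g_unif : ∀ k, TendstoUniformlyOn (fun n (z : ℝ × ℝ) => gn k n z.1 z.2)
    (fun z : ℝ × ℝ => g k z.1 z.2) atTop (Set.Icc (0 : ℝ) 1 ×ˢ Set.Icc (0 : ℝ) 1)
  carleman : ¬ Summable (fun k : ℕ =>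
    (alphaCarleman g (2 * (k + 1))) ^ (-(1 / (2 * ((k : ℝ) + 1)))))

/-- The truncated matrix `Z_p` as a random matrix. -/
def Zmat {Ω : Type*} (p : ℕ → ℕ) (x : (n : ℕ) → Fin (p n) → Fin n → Ω → ℝ)
    (t : ℕ → ℝ≥0∞) (n : ℕ) (ω : Ω) : Matrix (Fin (p n)) (Fin n) ℝ :=
  Matrix.of fun i j => trunc (t n) (x n i j ω)

end
noncomputable section

lemma isHermitian_of_transpose_eq {m : ℕ} {A : Matrix (Fin m) (Fin m) ℝ}
    (h : Aᵀ = A) : A.IsHermitian := by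
  show Aᴴ = A
  rw [Matrix.conjTranspose_eq_transpose_of_trivial]
  exact h

lemma smulGram_isHermitian {p n : ℕ} (c : ℝ) (Z : Matrix (Fin p) (Fin n) ℝ) :
    (c • (Z * Zᵀ)).IsHermitian := by
  show _ᴴ = _
  rw [Matrix.conjTranspose_eq_transpose_of_trivial, Matrix.transpose_smul,
    Matrix.transpose_mul, Matrix.transpose_transpose]

/-- Symmetrization: the symmetric matrix whose `(i,j)` entry, for `i ≤ j`, is `f i j`. -/
def symMat (n : ℕ) (f : Fin n → Fin n → ℝ) : Matrix (Fin n) (Fin n) ℝ :=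
  Matrix.of fun i j => if (i : ℕ) ≤ (j : ℕ) then f i j else f j i

lemma symMat_isHermitian (n : ℕ) (f : Fin n → Fin n → ℝ) : (symMat n f).IsHermitian := by
  apply isHermitian_of_transpose_eq
  ext i j
  simp only [Matrix.transpose_apply, symMat, Matrix.of_apply]
  by_cases h1 : (j : ℕ) ≤ (i : ℕ) <;> by_cases h2 : (i : ℕ) ≤ (j : ℕ) <;>
    simp only [h1, h2, if_true, if_false]
  · have : i = j := Fin.ext (le_antisymm h2 h1)
    subst this; rfl
  · omega

/-- A partition (as a finite set of blocks) is non-crossing. -/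
def NonCrossing (P : Finset (Finset ℕ)) : Prop :=
  ¬ ∃ a b c d : ℕ, a < b ∧ b < c ∧ c < d ∧
    ∃ B ∈ P, ∃ C ∈ P, B ≠ C ∧ a ∈ B ∧ c ∈ B ∧ b ∈ C ∧ d ∈ C

/-- `α_{m} = Σ_{σ ∈ E(m)} C_σ`, the multiplicative extension of `C` summed over
partitions with all blocks of even size. -/
def alphaE (C : ℕ → ℝ) (m : ℕ) : ℝ :=
  ∑ P ∈ (partitionsOf m).filter (fun P => ∀ B ∈ P, Even B.card), ∏ B ∈ P, C B.card

/-- `v² 1{|v| > t}`. -/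
def tailSq (t : ℝ≥0∞) (v : ℝ) : ℝ := if ENNReal.ofReal |v| ≤ t then 0 else v ^ 2

/-- The (untruncated) random matrix with entries `x n i j`. -/
def Xmat {Ω : Type*} (p : ℕ → ℕ) (x : (n : ℕ) → Fin (p n) → Fin n → Ω → ℝ)
    (n : ℕ) (ω : Ω) : Matrix (Fin (p n)) (Fin n) ℝ :=
  Matrix.of fun i j => x n i j ω

end
noncomputable section
/-- The edge (unordered pair of consecutive values) of a circuit at position `i`. -/
def edgeOf {k : ℕ} (π : Fin (2 * k + 1) → ℕ) (i : ℕ) : Sym2 ℕ :=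
  Sym2.mk (ext' π (i - 1)) (ext' π i)

/-- Quadruples of jointly- and cross-matched W-circuits of length `2k` with vertices in
`{1,…,n}` and exactly `b` distinct edge values. -/
def QuadSet (n k b : ℕ) : Set (Fin 4 → Fin (2 * k + 1) → ℕ) :=
  { χ |
    (∀ a, ext' (χ a) 0 = ext' (χ a) (2 * k) ∧
      ∀ i : ℕ, i ≤ 2 * k → 1 ≤ ext' (χ a) i ∧ ext' (χ a) i ≤ n) ∧
    -- jointly matched
    (∀ a, ∀ i ∈ Finset.Icc 1 (2 * k), ∃ a', ∃ i' ∈ Finset.Icc 1 (2 * k),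
      (a, i) ≠ (a', i') ∧ edgeOf (χ a) i = edgeOf (χ a') i') ∧
    -- cross matched
    (∀ a, ∃ i ∈ Finset.Icc 1 (2 * k), ∃ a', a' ≠ a ∧
      ∃ i' ∈ Finset.Icc 1 (2 * k), edgeOf (χ a) i = edgeOf (χ a') i') ∧
    -- exactly `b` distinct edge values
    (((Finset.univ : Finset (Fin 4)) ×ˢ Finset.Icc 1 (2 * k)).image
        (fun q => edgeOf (χ q.1) q.2)).card = b }
end

/-!
Put the values visited by the four circuits on the vertices of a graph whose edges are the
`b` edge values. Each circuit is a closed walk, so it stays inside one connected component,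
and cross-matching makes every circuit share a vertex with another one; four circuits
therefore meet at most two components, and a graph with at most two components has at most
`b + 2` vertices. A quadruple is then determined by labelling its `4(2k+1)` positions with
`b + 2` labels and giving each label a value in `{1, …, n}`; finally `b ≤ 8k`, as there are
only `8k` edge positions.
-/

namespace SimpleGraph

variable {V : Type*}

theorem card_le_card_edgeSet_add_two [Finite V] (G : SimpleGraph V) (r₀ r₁ : V)
    (h : ∀ v, G.Reachable r₀ v ∨ G.Reachable r₁ v) :
    Nat.card V ≤ Nat.card G.edgeSet + 2 := by
  set G' := G ⊔ edge r₀ r₁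
  have hG' : G'.Connected := by
    have hroot : ∀ v, G'.Reachable r₀ v := fun v => by
      have hle : G ≤ G' := le_sup_left
      rcases h v with hv | hv
      · exact hv.mono hle
      · refine Reachable.trans ?_ (hv.mono hle)
        by_cases hr : r₀ = r₁
        · rw [hr]
        · exact Adj.reachable (Or.inr (by simp [edge_adj, hr]))
    exact { preconnected := fun u v => (hroot u).symm.trans (hroot v), nonempty := ⟨r₀⟩ }
  have hedges : Nat.card G'.edgeSet ≤ Nat.card G.edgeSet + 1 := by
    simp only [Nat.card_coe_set_eq]
    calc G'.edgeSet.ncard ≤ (G.edgeSet ∪ {s(r₀, r₁)}).ncard :=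
          Set.ncard_le_ncard (by simp [G', edgeSet_sup]) (Set.toFinite _)
      _ ≤ G.edgeSet.ncard + 1 := by
          simpa using Set.ncard_union_le G.edgeSet {s(r₀, r₁)}
  have := hG'.card_vert_le_card_edgeSet_add_one
  omega

theorem card_edgeSet_induce_fromEdgeSet_le (E : Finset (Sym2 V)) (s : Set V) :
    Nat.card ((fromEdgeSet (E : Set (Sym2 V))).induce s).edgeSet ≤ E.card := by
  calc Nat.card ((fromEdgeSet (E : Set (Sym2 V))).induce s).edgeSet
      ≤ Nat.card (fromEdgeSet (E : Set (Sym2 V))).edgeSet :=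
        Nat.card_le_card_of_injective _ (Embedding.induce s).mapEdgeSet.injective
    _ ≤ Nat.card (E : Set (Sym2 V)) :=
        Nat.card_mono E.finite_toSet (by simp [edgeSet_fromEdgeSet])
    _ = E.card := by simp

theorem reachable_induce_fromEdgeSet_of_mem {E : Set (Sym2 V)} {s : Set V} {u v : s}
    (h : s(u.1, v.1) ∈ E) : ((fromEdgeSet E).induce s).Reachable u v := by
  by_cases huv : u = v
  · rw [huv]
  · exact Adj.reachable (by simpa [huv, Subtype.val_inj] using h)

end SimpleGraph

theorem Equivalence.exists_forall_rel_or_rel {α : Type*} [Fintype α] [Nonempty α]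
    {r : α → α → Prop} (hr : Equivalence r) (hα : Fintype.card α ≤ 4)
    (h : ∀ a, ∃ a', a' ≠ a ∧ r a a') : ∃ a₀ a₁, ∀ a, r a a₀ ∨ r a a₁ := by
  let s : Setoid α := ⟨r, hr⟩
  set classes := (Finset.univ : Finset α).image (Quotient.mk s)
  have hclasses : 2 * classes.card ≤ 4 := by
    refine (Finset.mul_card_image_le_card _ 2 fun c hc => ?_).trans hα
    obtain ⟨a, -, rfl⟩ := Finset.mem_image.mp hc
    obtain ⟨a', ha', haa'⟩ := h a
    refine Finset.one_lt_card.mpr ⟨a, by simp, a', ?_, ha'.symm⟩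
    simpa using (Quotient.sound (s := s) haa').symm
  obtain ⟨a₀⟩ := ‹Nonempty α›
  by_cases hall : ∀ a, r a a₀
  · exact ⟨a₀, a₀, fun a => Or.inl (hall a)⟩
  obtain ⟨a₁, ha₁⟩ := not_forall.mp hall
  have hpair : classes = {⟦a₀⟧, ⟦a₁⟧} := by
    refine (Finset.eq_of_subset_of_card_le (by simp [classes, Finset.insert_subset_iff]) ?_).symm
    rw [Finset.card_pair fun h => ha₁ (Quotient.exact h.symm)]
    omega
  refine ⟨a₀, a₁, fun a => ?_⟩
  have ha : ⟦a⟧ ∈ classes := Finset.mem_image_of_mem _ (Finset.mem_univ a)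
  rw [hpair, Finset.mem_insert, Finset.mem_singleton] at ha
  exact ha.imp Quotient.exact Quotient.exact

theorem exists_comp_eq_of_ncard_range_le {ι β : Type*} [Finite ι] {s : Set β} [Nonempty s]
    {m : ℕ} {f : ι → β} (hs : Set.range f ⊆ s) (hm : (Set.range f).ncard ≤ m) :
    ∃ (c : ι → Fin m) (g : Fin m → s), ∀ i, (g (c i) : β) = f i := by
  let e : Set.range f ↪ Fin m :=
    (Finite.equivFin _).toEmbedding.trans (Fin.castLEEmb (by rwa [Nat.card_coe_set_eq]))
  refine ⟨fun i => e ⟨f i, i, rfl⟩,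
    Function.extend e (fun v => ⟨v, hs v.2⟩) fun _ => Classical.arbitrary s, fun i => ?_⟩
  rw [e.injective.extend_apply]

theorem card_le_of_forall_ncard_range_le {ι β : Type*} [Fintype ι] [Nonempty ι]
    {S : Set (ι → β)} (s : Finset β) (m : ℕ)
    (h : ∀ f ∈ S, Set.range f ⊆ s ∧ (Set.range f).ncard ≤ m) :
    Nat.card S ≤ m ^ Fintype.card ι * s.card ^ m := by
  let F : (ι → Fin m) × (Fin m → s) → ι → β := fun p i => p.2 (p.1 i)
  have hS : S ⊆ Set.range F := by
    intro f hf
    have : Nonempty s := ⟨⟨f (Classical.arbitrary ι), (h f hf).1 ⟨_, rfl⟩⟩⟩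
    obtain ⟨c, g, hcg⟩ := exists_comp_eq_of_ncard_range_le (h f hf).1 (h f hf).2
    exact ⟨(c, g), funext hcg⟩
  calc Nat.card S ≤ Nat.card (Set.range F) := Nat.card_mono (Set.toFinite _) hS
    _ ≤ Nat.card ((ι → Fin m) × (Fin m → s)) := Finite.card_range_le F
    _ = m ^ Fintype.card ι * s.card ^ m := by simp

open SimpleGraph

theorem ext'_eq_apply {m : ℕ} (π : Fin (m + 1) → ℕ) (i : Fin (m + 1)) : ext' π i = π i :=
  dif_pos i.isLt

section Circuits

variable {ι : Type*} {k : ℕ} (χ : ι → Fin (2 * k + 1) → ℕ)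

def circuitVertex (a : ι) {j : ℕ} (hj : j ≤ 2 * k) : Set.range (Function.uncurry χ) :=
  ⟨ext' (χ a) j, (a, ⟨j, by omega⟩), (ext'_eq_apply (χ a) ⟨j, by omega⟩).symm⟩

variable [Fintype ι]

def edgeValues : Finset (Sym2 ℕ) :=
  ((Finset.univ : Finset ι) ×ˢ Finset.Icc 1 (2 * k)).image fun q => edgeOf (χ q.1) q.2

def circuitGraph : SimpleGraph (Set.range (Function.uncurry χ)) :=
  (fromEdgeSet (edgeValues χ : Set (Sym2 ℕ))).induce (Set.range (Function.uncurry χ))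

theorem circuitGraph_reachable_circuitVertex (a : ι) {j : ℕ} (hj : j ≤ 2 * k) :
    (circuitGraph χ).Reachable (circuitVertex χ a (Nat.zero_le _)) (circuitVertex χ a hj) := by
  induction j with
  | zero => rfl
  | succ j ih =>
    refine (ih (by omega)).trans (reachable_induce_fromEdgeSet_of_mem ?_)
    exact Finset.mem_image.mpr ⟨(a, j + 1), by simp; omega, rfl⟩

theorem circuitGraph_reachable_of_edgeOf_eq {a a' : ι} {i i' : ℕ}
    (hi : i ∈ Finset.Icc 1 (2 * k)) (hi' : i' ∈ Finset.Icc 1 (2 * k))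
    (h : edgeOf (χ a) i = edgeOf (χ a') i') :
    (circuitGraph χ).Reachable (circuitVertex χ a (Nat.zero_le _))
      (circuitVertex χ a' (Nat.zero_le _)) := by
  rw [Finset.mem_Icc] at hi hi'
  have hshared : ext' (χ a) i ∈ edgeOf (χ a') i' := h ▸ Sym2.mem_mk_right _ _
  refine (circuitGraph_reachable_circuitVertex χ a hi.2).trans ?_
  rcases Sym2.mem_iff.mp hshared with hv | hv
  · have : circuitVertex χ a hi.2 = circuitVertex χ a' (j := i' - 1) (by omega) := Subtype.ext hv
    exact this ▸ (circuitGraph_reachable_circuitVertex χ a' _).symm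
  · have : circuitVertex χ a hi.2 = circuitVertex χ a' hi'.2 := Subtype.ext hv
    exact this ▸ (circuitGraph_reachable_circuitVertex χ a' _).symm

end Circuits

theorem ncard_range_le_of_mem_quadSet {n k b : ℕ} {χ : Fin 4 → Fin (2 * k + 1) → ℕ}
    (hχ : χ ∈ QuadSet n k b) : (Set.range (Function.uncurry χ)).ncard ≤ b + 2 := by
  obtain ⟨-, -, hcross, hcard⟩ := hχ
  let root (a : Fin 4) := circuitVertex χ a (Nat.zero_le _)
  obtain ⟨a₀, a₁, hroots⟩ : ∃ a₀ a₁, ∀ a,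
      (circuitGraph χ).Reachable (root a) (root a₀) ∨
        (circuitGraph χ).Reachable (root a) (root a₁) := by
    refine (reachable_is_equivalence _).comap root |>.exists_forall_rel_or_rel (by simp)
      fun a => ?_
    obtain ⟨i, hi, a', ha', i', hi', h⟩ := hcross a
    exact ⟨a', ha', circuitGraph_reachable_of_edgeOf_eq χ hi hi' h⟩
  have hcover : ∀ v, (circuitGraph χ).Reachable (root a₀) v ∨
      (circuitGraph χ).Reachable (root a₁) v := by
    rintro ⟨-, ⟨a, j⟩, rfl⟩
    have hv : circuitVertex χ a (Nat.le_of_lt_succ j.2) =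
        ⟨Function.uncurry χ (a, j), (a, j), rfl⟩ := Subtype.ext (ext'_eq_apply _ _)
    have := hv ▸ circuitGraph_reachable_circuitVertex χ a (Nat.le_of_lt_succ j.2)
    exact (hroots a).imp (·.symm.trans this) (·.symm.trans this)
  have hedges : Nat.card (circuitGraph χ).edgeSet ≤ (edgeValues χ).card :=
    card_edgeSet_induce_fromEdgeSet_le _ _
  calc (Set.range (Function.uncurry χ)).ncard
      = Nat.card (Set.range (Function.uncurry χ)) := (Nat.card_coe_set_eq _).symm
    _ ≤ Nat.card (circuitGraph χ).edgeSet + 2 := card_le_card_edgeSet_add_two _ _ _ hcover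
    _ ≤ b + 2 := by rw [← hcard]; exact Nat.add_le_add_right hedges 2

theorem quadSet_eq_empty_of_lt {n k b : ℕ} (hb : 8 * k < b) : QuadSet n k b = ∅ := by
  refine Set.eq_empty_of_forall_notMem fun χ hχ => ?_
  obtain ⟨-, -, -, hcard⟩ := hχ
  have := hcard ▸ Finset.card_image_le (s := (Finset.univ : Finset (Fin 4)) ×ˢ
    Finset.Icc 1 (2 * k)) (f := fun q => edgeOf (χ q.1) q.2)
  simp only [Finset.card_product, Finset.card_univ, Fintype.card_fin, Nat.card_Icc] at this
  omega

theorem card_quadSet_le (n k b : ℕ) :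
    Nat.card (QuadSet n k b) ≤ (b + 2) ^ (8 * k + 4) * n ^ (b + 2) := by
  rw [← Nat.card_image_of_injective Function.uncurry_injective]
  refine (card_le_of_forall_ncard_range_le (Finset.Icc 1 n) (b + 2) ?_).trans_eq (by
    simp only [Fintype.card_prod, Fintype.card_fin, Nat.card_Icc, Nat.add_sub_cancel]; ring)
  rintro _ ⟨χ, hχ, rfl⟩
  refine ⟨?_, ncard_range_le_of_mem_quadSet hχ⟩
  rintro _ ⟨⟨a, i⟩, rfl⟩
  simpa [ext'_eq_apply] using (hχ.1 a).2 i (Nat.le_of_lt_succ i.2)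

theorem quadruple_circuit_count_le_general
    (k : ℕ) :
    ∃ C : ℝ, 0 < C ∧ ∀ n b : ℕ,
      (Nat.card (QuadSet n k b) : ℝ) ≤ C * (n : ℝ) ^ (b + 2) := by
  refine ⟨((8 * k + 2 : ℕ) : ℝ) ^ (8 * k + 4), by positivity, fun n b => ?_⟩
  rcases le_or_gt b (8 * k) with hb | hb
  · have hC : (b + 2) ^ (8 * k + 4) ≤ (8 * k + 2) ^ (8 * k + 4) :=
      Nat.pow_le_pow_left (by omega) _
    exact_mod_cast (card_quadSet_le n k b).trans (Nat.mul_le_mul_right _ hC)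
  · rw [quadSet_eq_empty_of_lt hb, Nat.card_of_isEmpty, Nat.cast_zero]
    positivity

/-- Lemma 5.4: `Q_{k,4}^b ≤ C n^{b+2}` for a constant `C` depending
only on `k`. -/
theorem quadruple_circuit_count_le
    (k : ℕ) (hk : 1 ≤ k) :
    ∃ C : ℝ, 0 < C ∧ ∀ n b : ℕ,
      (Nat.card (QuadSet n k b) : ℝ) ≤ C * (n : ℝ) ^ (b + 2) :=
  quadruple_circuit_count_le_general k
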